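/- arXiv:2207.06119 — 6 statements merged into one kernel-verified Lean document; each statement's English description precedes it below -/
import Mathlib

section
/- Let $(\lambda_n)_{n\ge 0}$ be a real sequence with $\sum_{n=0}^\infty |\lambda_n| < \infty$, and for $k\ge 1$ let $e_k = \sum_{0\le i_1 < \dots < i_k} \lambda_{i_1}\cdots\lambda_{i_k}$ be the $k$-th elementary symmetric function of the sequence. If $e_k \ge 0$ for every $k \ge 1$, then $\lambda_n \ge 0$ for every $n \ge 0$. -/
/-- The `k`-th elementary symmetric function of a sequence `lam`,
defined as the (absolutely convergent) sum over all `k`-element index sets. -/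
noncomputable def esymm (lam : ℕ → ℝ) (k : ℕ) : ℝ :=
  ∑' s : {s : Finset ℕ // s.card = k}, ∏ i ∈ s.1, lam i

/-- Products over finite subsets of a summable nonneg family are summable. -/
lemma summable_prod_finset {a : ℕ → ℝ} (ha0 : ∀ i, 0 ≤ a i) (ha : Summable a) :
    Summable (fun s : Finset ℕ => ∏ i ∈ s, a i) := by
  apply summable_of_sum_le (c := Real.exp (∑' i, a i))
  · intro s
    exact Finset.prod_nonneg fun i _ => ha0 i
  · intro S
    classical
    set T : Finset ℕ := S.sup id with hT
    have hsub : S ⊆ T.powerset := by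
      intro s hs
      exact Finset.mem_powerset.2 (Finset.le_sup (f := id) hs)
    calc ∑ s ∈ S, ∏ i ∈ s, a i ≤ ∑ s ∈ T.powerset, ∏ i ∈ s, a i := by
          apply Finset.sum_le_sum_of_subset_of_nonneg hsub
          intro s _ _; exact Finset.prod_nonneg fun i _ => ha0 i
      _ = ∏ i ∈ T, (a i + 1) := by
          rw [Finset.prod_add]; simp
      _ ≤ ∏ i ∈ T, Real.exp (a i) := by
          apply Finset.prod_le_prod
          · intro i _; have := ha0 i; linarith
          · intro i _; linarith [Real.add_one_le_exp (a i)]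
      _ = Real.exp (∑ i ∈ T, a i) := (Real.exp_sum T a).symm
      _ ≤ Real.exp (∑' i, a i) := by
          apply Real.exp_le_exp.2
          exact Summable.sum_le_tsum T (fun i _ => ha0 i) ha

set_option maxHeartbeats 1000000 in
theorem stmt_0 (lam : ℕ → ℝ) (hsum : Summable (fun n => |lam n|))
    (hek : ∀ k : ℕ, 1 ≤ k → 0 ≤ esymm lam k) :
    ∀ n : ℕ, 0 ≤ lam n := by
  classical
  by_contra h
  push_neg at h
  obtain ⟨m, hm⟩ := h
  have hmne : lam m ≠ 0 := ne_of_lt hm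
  set x : ℝ := -(lam m)⁻¹ with hx
  have hxpos : 0 < x := by
    rw [hx]
    simp only [neg_pos]
    exact inv_lt_zero.mpr hm
  have hmx : lam m * x = -1 := by
    rw [hx]; field_simp
  -- The function on finite sets
  set G : Finset ℕ → ℝ := fun s => ∏ i ∈ s, (lam i * x) with hGdef
  have hGsummable : Summable G := by
    have habs : Summable (fun s : Finset ℕ => ∏ i ∈ s, |lam i * x|) := by
      apply summable_prod_finset
      · intro i; exact abs_nonneg _
      · have : (fun i => |lam i * x|) = fun i => |lam i| * |x| := by
          funext i; rw [abs_mul]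
        rw [this]
        exact hsum.mul_right _
    apply Summable.of_abs
    have : (fun s : Finset ℕ => |G s|) = fun s => ∏ i ∈ s, |lam i * x| := by
      funext s; rw [hGdef]; exact Finset.abs_prod s _
    rw [this]
    exact habs
  -- Pairing argument: total sum is 0
  have hzero : ∑' s : Finset ℕ, G s = 0 := by
    let e : {s : Finset ℕ // m ∉ s} × Bool ≃ Finset ℕ :=
      { toFun := fun p => if p.2 then insert m p.1.1 else p.1.1
        invFun := fun t => (⟨t.erase m, Finset.notMem_erase m t⟩, m ∈ t)
        left_inv := by
          rintro ⟨⟨s, hs⟩, b⟩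
          cases b
          · simp [hs, Finset.erase_eq_of_notMem hs]
          · simp [hs, Finset.erase_insert hs]
        right_inv := by
          intro t
          by_cases hmt : m ∈ t <;> simp [hmt, Finset.insert_erase,
            Finset.erase_eq_of_notMem] }
    have he : ∑' p : {s : Finset ℕ // m ∉ s} × Bool, G (e p) = ∑' s : Finset ℕ, G s :=
      e.tsum_eq G
    rw [← he]
    have hsprod : Summable (fun p : {s : Finset ℕ // m ∉ s} × Bool => G (e p)) :=
      hGsummable.comp_injective e.injective
    rw [Summable.tsum_prod' hsprod (fun a => (hsprod.prod_factor a))]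
    have : ∀ a : {s : Finset ℕ // m ∉ s}, ∑' b : Bool, G (e (a, b)) = 0 := by
      intro a
      rw [tsum_fintype]
      have h1 : G (e (a, true)) = (lam m * x) * G a.1 := by
        simp only [e, hGdef, Equiv.coe_fn_mk, if_true]
        exact Finset.prod_insert a.2
      have h2 : G (e (a, false)) = G a.1 := by
        simp [e, hGdef]
      simp [Fintype.sum_bool, h1, h2, hmx]
    simp only [this, tsum_zero]
  -- Sigma decomposition: total sum is ∑' k, esymm lam k * x^k
  let σ : Finset ℕ ≃ (Σ k : ℕ, {s : Finset ℕ // s.card = k}) :=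
    { toFun := fun s => ⟨s.card, s, rfl⟩
      invFun := fun p => p.2.1
      left_inv := fun s => rfl
      right_inv := by rintro ⟨k, s, rfl⟩; rfl }
  have hσs : Summable (fun p : Σ k : ℕ, {s : Finset ℕ // s.card = k} => G (σ.symm p)) :=
    σ.symm.summable_iff.2 hGsummable
  have hσ : ∑' s : Finset ℕ, G s = ∑' k : ℕ, ∑' s : {s : Finset ℕ // s.card = k}, G s.1 := by
    rw [← σ.symm.tsum_eq G, Summable.tsum_sigma hσs]
    rfl
  have hfiber : ∀ k : ℕ, (∑' s : {s : Finset ℕ // s.card = k}, G s.1) = esymm lam k * x ^ k := by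
    intro k
    have : ∀ s : {s : Finset ℕ // s.card = k}, G s.1 = (∏ i ∈ s.1, lam i) * x ^ k := by
      rintro ⟨s, rfl⟩
      simp only [hGdef, Finset.prod_mul_distrib, Finset.prod_const]
    simp_rw [this]
    rw [tsum_mul_right]
    rfl
  have hksummable : Summable (fun k : ℕ => esymm lam k * x ^ k) := by
    have := hσs.sigma (f := fun p => G (σ.symm p))
    convert this using 1
    case e'_3 => rfl
    funext k
    rw [← hfiber k]
    rfl
  have hnonneg : ∀ k : ℕ, k ≠ 0 → 0 ≤ esymm lam k * x ^ k := by
    intro k hk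
    exact mul_nonneg (hek k (Nat.one_le_iff_ne_zero.2 hk)) (le_of_lt (pow_pos hxpos k))
  have h0 : esymm lam 0 * x ^ 0 = 1 := by
    have : esymm lam 0 = 1 := by
      unfold esymm
      rw [tsum_eq_single (⟨∅, Finset.card_empty⟩ : {s : Finset ℕ // s.card = 0})]
      · simp
      · rintro ⟨s, hs⟩ hne
        exfalso
        apply hne
        ext : 1
        simpa using Finset.card_eq_zero.1 hs
    simp [this]
  have hle : (1 : ℝ) ≤ ∑' k : ℕ, esymm lam k * x ^ k := by
    rw [← h0]
    exact Summable.le_tsum hksummable 0 (fun j hj => hnonneg j hj)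
  simp_rw [← hfiber] at hle
  rw [← hσ, hzero] at hle
  linarith
end

section
/- Let $(\lambda_n)_{n\ge 0}$ be an absolutely summable real sequence whose elementary symmetric functions satisfy $e_k \ge 0$ for all $k \ge 1$. Then for every $x > 0$, $\prod_{n=0}^\infty (1+\lambda_n x) \ge 1$; in particular the infinite product is nonzero for all $x > 0$. -/
open Filter

theorem stmt_5 (lam : ℕ → ℝ) (hsum : Summable (fun n => |lam n|))
    (hek : ∀ k : ℕ, 1 ≤ k → 0 ≤ esymm lam k) :
    ∀ x : ℝ, 0 < x → ∃ L : ℝ, 1 ≤ L ∧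
      Tendsto (fun m => ∏ n ∈ Finset.range m, (1 + lam n * x)) atTop (nhds L) := by
  intro x hx
  set g : Finset ℕ → ℝ := fun s => ∏ i ∈ s, (lam i * x) with hg_def
  have ha : Summable (fun n => |lam n * x|) := by
    simpa [abs_mul, abs_of_pos hx, mul_comm] using hsum.mul_right x
  -- summability of the absolute products
  have hh : Summable (fun s : Finset ℕ => ∏ i ∈ s, |lam i * x|) := by
    apply summable_of_sum_le (c := Real.exp (∑' n, |lam n * x|))
      (fun s => Finset.prod_nonneg fun i _ => abs_nonneg _)
    intro u
    set m : ℕ := (u.sup fun s => s.sup id) + 1 with hm_def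
    have hmem : ∀ s ∈ u, s ⊆ Finset.range m := by
      intro s hs i hi
      have h1 : i ≤ s.sup id := Finset.le_sup (f := id) hi
      have h2 : s.sup id ≤ u.sup fun s => s.sup id := Finset.le_sup (f := fun s => s.sup id) hs
      exact Finset.mem_range.2 (Nat.lt_succ_of_le (h1.trans h2))
    have hsubset : u ⊆ (Finset.range m).powerset := fun s hs =>
      Finset.mem_powerset.2 (hmem s hs)
    calc ∑ s ∈ u, ∏ i ∈ s, |lam i * x|
        ≤ ∑ s ∈ (Finset.range m).powerset, ∏ i ∈ s, |lam i * x| :=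
          Finset.sum_le_sum_of_subset_of_nonneg hsubset
            (fun s _ _ => Finset.prod_nonneg fun i _ => abs_nonneg _)
      _ = ∏ n ∈ Finset.range m, (|lam n * x| + 1) := by
          rw [Finset.prod_add]; simp
      _ ≤ ∏ n ∈ Finset.range m, Real.exp (|lam n * x|) :=
          Finset.prod_le_prod (fun i _ => by positivity)
            (fun i _ => Real.add_one_le_exp _)
      _ = Real.exp (∑ n ∈ Finset.range m, |lam n * x|) := by
          rw [Real.exp_sum]
      _ ≤ Real.exp (∑' n, |lam n * x|) := by
          apply Real.exp_le_exp.2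
          exact Summable.sum_le_tsum _ (fun i _ => abs_nonneg _) ha
  have hg : Summable g := by
    apply Summable.of_abs
    have : (fun s : Finset ℕ => |g s|) = fun s => ∏ i ∈ s, |lam i * x| := by
      funext s; rw [hg_def]; exact Finset.abs_prod _ _
    rw [this]; exact hh
  -- the limit of partial products
  have hpow : Tendsto (fun m => (Finset.range m).powerset) atTop atTop := by
    rw [tendsto_atTop]
    intro b
    set m : ℕ := (b.sup fun s => s.sup id) + 1 with hm_def
    filter_upwards [eventually_ge_atTop m] with n hn
    intro s hs
    apply Finset.mem_powerset.2
    intro i hi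
    have h1 : i ≤ s.sup id := Finset.le_sup (f := id) hi
    have h2 : s.sup id ≤ b.sup fun s => s.sup id := Finset.le_sup (f := fun s => s.sup id) hs
    exact Finset.mem_range.2 (lt_of_lt_of_le (Nat.lt_succ_of_le (h1.trans h2)) hn)
  have htend : Tendsto (fun m => ∑ s ∈ (Finset.range m).powerset, g s) atTop
      (nhds (∑' s, g s)) := hg.hasSum.comp hpow
  have heq : ∀ m, ∑ s ∈ (Finset.range m).powerset, g s
      = ∏ n ∈ Finset.range m, (1 + lam n * x) := by
    intro m
    have : ∀ n ∈ Finset.range m, (1 + lam n * x) = (lam n * x + 1) := fun n _ => by ring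
    rw [Finset.prod_congr rfl this, Finset.prod_add]
    simp [hg_def]
  refine ⟨∑' s, g s, ?_, by simpa [heq] using htend⟩
  -- now show 1 ≤ ∑' s, g s via the cardinality decomposition
  set e := Equiv.sigmaFiberEquiv (fun s : Finset ℕ => s.card) with he_def
  have hsig : Summable (fun p : Σ k, {s : Finset ℕ // s.card = k} => g p.2.1) := by
    have := hg.comp_injective e.injective
    simpa [he_def, Function.comp_def, Equiv.sigmaFiberEquiv] using this
  have hfiber : ∀ k, (∑' s : {s : Finset ℕ // s.card = k}, g s.1) = esymm lam k * x ^ k := by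
    intro k
    rw [esymm, ← tsum_mul_right]
    congr 1; funext s
    rw [hg_def]
    simp only
    rw [Finset.prod_mul_distrib, Finset.prod_const, s.2]
  have hL : (∑' s, g s) = ∑' k, esymm lam k * x ^ k := by
    rw [← e.tsum_eq g]
    simp only [he_def, Equiv.sigmaFiberEquiv, Equiv.coe_fn_mk]
    rw [Summable.tsum_sigma hsig]
    exact tsum_congr hfiber
  have hsum2 : Summable (fun k => esymm lam k * x ^ k) := by
    have := hsig.sigma
    simpa [hfiber] using this
  have h00 : esymm lam 0 = 1 := by
    rw [esymm]
    have huniq : ∀ s : {s : Finset ℕ // s.card = 0}, s = ⟨∅, rfl⟩ := fun s =>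
      Subtype.ext (Finset.card_eq_zero.mp s.2)
    rw [tsum_eq_single (⟨∅, rfl⟩ : {s : Finset ℕ // s.card = 0})
      (fun b hb => absurd (huniq b) hb)]
    simp
  have h0 : esymm lam 0 * x ^ 0 = 1 := by rw [h00]; simp
  rw [hL, ← h0]
  exact Summable.le_tsum hsum2 0 (fun j hj => mul_nonneg
    (hek j (Nat.one_le_iff_ne_zero.2 hj)) (pow_nonneg hx.le j))
end

section
/- Let $\hat\rho$ be a compact self-adjoint operator on a separable Hilbert space with eigenvalue sequence $(\lambda_n)$ (with multiplicity) satisfying $\sum_n |\lambda_n| < \infty$. If every elementary symmetric function $e_k$ of the eigenvalues is nonnegative for $k \ge 1$, then $\hat\rho$ is positive semidefinite. -/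
open Finset

/-- Product formula over a finite set. -/
lemma prod_one_add_eq (μ : ℕ → ℝ) (s : Finset ℕ) :
    ∏ i ∈ s, (μ i + 1) = ∑ A ∈ s.powerset, ∏ i ∈ A, μ i := by
  rw [Finset.prod_add]
  simp

lemma my_summable_prod_of_nonneg {μ : ℕ → ℝ} (hμ : ∀ n, 0 ≤ μ n) (hs : Summable μ) :
    Summable (fun A : Finset ℕ => ∏ i ∈ A, μ i) := by
  apply summable_of_sum_le (c := Real.exp (∑' n, μ n))
  · intro A
    exact Finset.prod_nonneg fun i _ => hμ i
  · intro u
    have hsub : ∀ A ∈ u, A ∈ (u.sup id).powerset := fun A hA =>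
      Finset.mem_powerset.2 (Finset.le_sup (f := id) hA)
    calc ∑ A ∈ u, ∏ i ∈ A, μ i ≤ ∑ A ∈ (u.sup id).powerset, ∏ i ∈ A, μ i := by
          apply Finset.sum_le_sum_of_subset_of_nonneg (fun A hA => hsub A hA)
          intro A _ _; exact Finset.prod_nonneg fun i _ => hμ i
      _ = ∏ i ∈ u.sup id, (μ i + 1) := (prod_one_add_eq μ _).symm
      _ ≤ ∏ i ∈ u.sup id, Real.exp (μ i) := by
          apply Finset.prod_le_prod
          · intro i _; have := hμ i; linarith
          · intro i _; exact Real.add_one_le_exp (μ i)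
      _ = Real.exp (∑ i ∈ u.sup id, μ i) := (Real.exp_sum _ _).symm
      _ ≤ Real.exp (∑' n, μ n) := by
          apply Real.exp_le_exp.2
          exact Summable.sum_le_tsum _ (fun i _ => hμ i) hs

set_option maxHeartbeats 1600000 in
/-- All eigenvalues are nonnegative. -/
lemma lam_nonneg (lam : ℕ → ℝ) (hsum : Summable (fun n => |lam n|))
    (hek : ∀ k : ℕ, 1 ≤ k → 0 ≤ esymm lam k) : ∀ n, 0 ≤ lam n := by
  by_contra h
  push_neg at h
  obtain ⟨m, hm⟩ := h
  set t : ℝ := -(lam m)⁻¹ with ht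
  have htpos : 0 < t := by
    rw [ht, neg_pos]
    exact inv_lt_zero.mpr hm
  have htne : lam m * t + 1 = 0 := by
    rw [ht]
    rw [mul_neg, mul_inv_cancel₀ (ne_of_lt hm)]
    ring
  -- the summand over all finite subsets
  set g : Finset ℕ → ℝ := fun A => (∏ i ∈ A, lam i) * t ^ A.card with hg_def
  have habs : ∀ A : Finset ℕ, |g A| = ∏ i ∈ A, (|lam i| * t) := by
    intro A
    rw [Finset.prod_mul_distrib, Finset.prod_const]
    rw [hg_def, abs_mul, Finset.abs_prod, abs_pow, abs_of_pos htpos]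
  have hGsum : Summable (fun A : Finset ℕ => ∏ i ∈ A, (|lam i| * t)) := by
    apply my_summable_prod_of_nonneg
    · intro n; exact mul_nonneg (abs_nonneg _) htpos.le
    · exact hsum.mul_right t
  have hg : Summable g := by
    apply Summable.of_abs
    simpa only [habs] using hGsum
  -- the partial sums over powersets of ranges
  have hS : ∀ N : ℕ, ∑ A ∈ (Finset.range N).powerset, g A
      = ∏ i ∈ Finset.range N, (lam i * t + 1) := by
    intro N
    rw [prod_one_add_eq (fun i => lam i * t) (Finset.range N)]
    apply Finset.sum_congr rfl
    intro A _
    rw [Finset.prod_mul_distrib, Finset.prod_const, hg_def]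
  have hmono : Monotone (fun N : ℕ => (Finset.range N).powerset) := by
    intro a b hab
    exact Finset.powerset_mono.2 (Finset.range_subset_range.2 hab)
  have htend : Filter.Tendsto (fun N : ℕ => (Finset.range N).powerset)
      Filter.atTop Filter.atTop := by
    apply Filter.tendsto_atTop_finset_of_monotone hmono
    intro A
    obtain ⟨n, hn⟩ := A.exists_nat_subset_range
    exact ⟨n, Finset.mem_powerset.2 hn⟩
  have hlim : Filter.Tendsto (fun N => ∑ A ∈ (Finset.range N).powerset, g A)
      Filter.atTop (nhds (∑' A, g A)) := hg.hasSum.comp htend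
  have hzero : (∑' A, g A) = 0 := by
    have hev : ∀ N, m + 1 ≤ N → ∑ A ∈ (Finset.range N).powerset, g A = 0 := by
      intro N hN
      rw [hS N]
      apply Finset.prod_eq_zero (i := m)
      · exact Finset.mem_range.2 (by omega)
      · exact htne
    have : Filter.Tendsto (fun N => ∑ A ∈ (Finset.range N).powerset, g A)
        Filter.atTop (nhds (0 : ℝ)) := by
      apply Filter.Tendsto.congr' _ tendsto_const_nhds
      filter_upwards [Filter.eventually_ge_atTop (m + 1)] with N hN
      exact (hev N hN).symm
    exact tendsto_nhds_unique hlim this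
  -- decompose the sum by cardinality
  set e := Equiv.sigmaFiberEquiv (fun A : Finset ℕ => A.card) with he
  have hgs : Summable (fun p : Σ k : ℕ, {A : Finset ℕ // A.card = k} => g (e p)) :=
    e.summable_iff.2 hg
  have hfiber : ∀ k : ℕ, (∑' A : {A : Finset ℕ // A.card = k}, g A.1)
      = esymm lam k * t ^ k := by
    intro k
    rw [esymm, ← tsum_mul_right]
    apply tsum_congr
    intro A
    rw [hg_def]
    simp only [A.2]
  have hsig : (∑' A, g A) = ∑' k : ℕ, esymm lam k * t ^ k := by
    rw [← e.tsum_eq g, Summable.tsum_sigma hgs]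
    exact tsum_congr hfiber
  have hF : Summable (fun k : ℕ => esymm lam k * t ^ k) := by
    have := hgs.sigma
    refine this.congr fun k => ?_
    exact hfiber k
  have he0 : esymm lam 0 = 1 := by
    rw [esymm]
    rw [tsum_eq_single (⟨∅, Finset.card_empty⟩ : {s : Finset ℕ // s.card = 0})]
    · simp
    · intro s hs
      exact absurd (Subtype.ext (Finset.card_eq_zero.1 s.2)) hs
  have h1 : (1 : ℝ) ≤ ∑' k : ℕ, esymm lam k * t ^ k := by
    have := Summable.le_tsum hF 0 (fun j hj => mul_nonneg (hek j (by omega)) (pow_nonneg htpos.le j))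
    simpa [he0] using this
  rw [hsig] at hzero
  linarith

theorem stmt_6 {H : Type*} [NormedAddCommGroup H] [InnerProductSpace ℂ H]
    [CompleteSpace H] [TopologicalSpace.SeparableSpace H]
    (ρ : H →L[ℂ] H) (hsa : IsSelfAdjoint ρ) (hcomp : IsCompactOperator ρ)
    (b : HilbertBasis ℕ ℂ H) (lam : ℕ → ℝ)
    (heig : ∀ n : ℕ, ρ (b n) = (lam n : ℂ) • b n)
    (hsum : Summable (fun n => |lam n|))
    (hek : ∀ k : ℕ, 1 ≤ k → 0 ≤ esymm lam k) :
    ∀ f : H, 0 ≤ (inner ℂ f (ρ f) : ℂ).re := by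
  have hlam := lam_nonneg lam hsum hek
  intro f
  have hsum1 : HasSum (fun i => (inner ℂ f (b i) : ℂ) * inner ℂ (b i) (ρ f)) (inner ℂ f (ρ f)) :=
    b.hasSum_inner_mul_inner f (ρ f)
  have hterm : ∀ i, (inner ℂ f (b i) : ℂ) * inner ℂ (b i) (ρ f)
      = (lam i : ℂ) * Complex.normSq (inner ℂ (b i) f : ℂ) := by
    intro i
    have h1 : (inner ℂ (b i) (ρ f) : ℂ) = inner ℂ (ρ (b i)) f := by
      rw [← ContinuousLinearMap.adjoint_inner_left, hsa.adjoint_eq]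
    rw [h1, heig i, inner_smul_left]
    have h2 : (inner ℂ f (b i) : ℂ) = starRingEnd ℂ (inner ℂ (b i) f) := by
      rw [← inner_conj_symm]
    rw [h2]
    rw [Complex.conj_ofReal]
    rw [Complex.normSq_eq_conj_mul_self]
    ring
  have hre : HasSum (fun i => ((inner ℂ f (b i) : ℂ) * inner ℂ (b i) (ρ f)).re)
      (inner ℂ f (ρ f) : ℂ).re := Complex.hasSum_re hsum1
  apply hre.nonneg
  intro i
  rw [hterm i, ← Complex.ofReal_mul, Complex.ofReal_re]
  exact mul_nonneg (hlam i) (Complex.normSq_nonneg _)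
end

section
/- Let $\rho(x,y) = (\alpha_1(x+y) + i\beta_1(x-y) + \gamma_0)\,\rho_G(x,y)$ where $\rho_G$ is a Gaussian kernel with parameters $A, C > 0$, $B, D, E \in \mathbb{R}$, and $(\alpha_1,\beta_1) \ne (0,0)$ with $\alpha_1, \beta_1, \gamma_0$ real. Then the integral operator $\hat\rho$ on $L^2(\mathbb{R})$ is not positive semidefinite. -/
open MeasureTheory Complex Filter

noncomputable section

lemma quad_tendsto (b c d : ℂ) (hb : b.re < 0) :
    Tendsto (fun x : ℝ => Complex.exp (b * x ^ 2 + c * x + d)) atTop (nhds 0) ∧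
    Tendsto (fun x : ℝ => Complex.exp (b * x ^ 2 + c * x + d)) atBot (nhds 0) := by
  have key : ∀ l : Filter ℝ, Tendsto (fun x : ℝ => b.re * x ^ 2 + c.re * x + d.re) l atBot →
      Tendsto (fun x : ℝ => Complex.exp (b * x ^ 2 + c * x + d)) l (nhds 0) := by
    intro l hl
    rw [tendsto_zero_iff_norm_tendsto_zero]
    have : ∀ x : ℝ, ‖Complex.exp (b * x ^ 2 + c * x + d)‖
        = Real.exp (b.re * x ^ 2 + c.re * x + d.re) := by
      intro x
      rw [Complex.norm_exp]
      congr 1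
      simp [Complex.add_re, Complex.mul_re, Complex.ofReal_re, Complex.ofReal_im,
        ← Complex.ofReal_pow]
    simp_rw [this]
    exact Real.tendsto_exp_atBot.comp hl
  have hfun : (fun x : ℝ => b.re * x ^ 2 + c.re * x + d.re)
      = fun x : ℝ => x * (b.re * x + c.re) + d.re := by funext x; ring
  constructor
  · apply key
    rw [hfun]
    apply tendsto_atBot_add_const_right
    exact Tendsto.atTop_mul_atBot₀ tendsto_id
      (tendsto_atBot_add_const_right _ c.re ((tendsto_const_mul_atBot_of_neg hb).2 tendsto_id))
  · apply key
    rw [hfun]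
    apply tendsto_atBot_add_const_right
    exact Tendsto.atBot_mul_atTop₀ tendsto_id
      (tendsto_atTop_add_const_right _ c.re ((tendsto_const_mul_atTop_of_neg hb).2 tendsto_id))

lemma integrable_linear_mul_cexp (b c d u v : ℂ) (hb : b.re < 0) :
    Integrable (fun x : ℝ => (u * x + v) * Complex.exp (b * x ^ 2 + c * x + d)) := by
  have hcont : Continuous (fun x : ℝ => (u * x + v) * Complex.exp (b * x ^ 2 + c * x + d)) := by
    fun_prop
  refine Integrable.mono' (g := fun x : ℝ =>
      ‖u‖ * (‖Complex.exp (b * x ^ 2 + (c+1) * x + d)‖ + ‖Complex.exp (b * x ^ 2 + (c-1) * x + d)‖)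
      + ‖v‖ * ‖Complex.exp (b * x ^ 2 + c * x + d)‖) ?_ hcont.aestronglyMeasurable ?_
  · exact (((integrable_cexp_quadratic' hb (c+1) d).norm.add
      (integrable_cexp_quadratic' hb (c-1) d).norm).const_mul _).add
      ((integrable_cexp_quadratic' hb c d).norm.const_mul _)
  · filter_upwards with x
    have h1 : ‖(u * x + v) * Complex.exp (b * x ^ 2 + c * x + d)‖
        ≤ (‖u‖ * |x| + ‖v‖) * ‖Complex.exp (b * x ^ 2 + c * x + d)‖ := by
      rw [norm_mul]
      gcongr
      refine (norm_add_le _ _).trans ?_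
      simp [Complex.norm_real]
    refine h1.trans ?_
    have h2 : |x| * ‖Complex.exp (b * x ^ 2 + c * x + d)‖
        ≤ ‖Complex.exp (b * x ^ 2 + (c+1) * x + d)‖ + ‖Complex.exp (b * x ^ 2 + (c-1) * x + d)‖ := by
      have hn : ∀ e : ℂ, ‖Complex.exp (b * x ^ 2 + e * x + d)‖
          = Real.exp ((b * x ^ 2 + c * x + d).re + (e - c).re * x) := by
        intro e
        rw [Complex.norm_exp]
        congr 1
        have : ((e - c).re : ℝ) * x = ((e-c) * x).re := by
          simp [Complex.mul_re]
        rw [this]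
        simp only [Complex.add_re, Complex.sub_re, Complex.mul_re,
          Complex.ofReal_re, Complex.ofReal_im, mul_zero, zero_mul, sub_zero, add_zero]
        ring
      rw [hn (c+1), hn (c-1), hn c]
      have e1 : ((c + 1 : ℂ) - c).re = 1 := by simp
      have e2 : ((c - 1 : ℂ) - c).re = -1 := by simp
      have e3 : ((c : ℂ) - c).re = 0 := by simp
      rw [e1, e2, e3, zero_mul, add_zero, one_mul, neg_one_mul]
      set P := (b * (x:ℂ) ^ 2 + c * x + d).re with hP
      have hx : |x| ≤ Real.exp x + Real.exp (-x) := by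
        calc |x| ≤ Real.exp |x| := (Real.add_one_le_exp |x|).trans' (by linarith [abs_nonneg x])
          _ ≤ Real.exp x + Real.exp (-x) := by
            rcases abs_cases x with ⟨h, _⟩ | ⟨h, _⟩
            · rw [h]; linarith [(Real.exp_pos (-x)).le]
            · rw [h]; linarith [(Real.exp_pos x).le]
      have : Real.exp (P + x) + Real.exp (P + -x)
          = Real.exp P * (Real.exp x + Real.exp (-x)) := by
        rw [Real.exp_add, Real.exp_add]; ring
      rw [this, mul_comm (|x|)]
      exact mul_le_mul_of_nonneg_left hx (Real.exp_pos P).le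
    calc (‖u‖ * |x| + ‖v‖) * ‖Complex.exp (b * x ^ 2 + c * x + d)‖
        = ‖u‖ * (|x| * ‖Complex.exp (b * x ^ 2 + c * x + d)‖)
          + ‖v‖ * ‖Complex.exp (b * x ^ 2 + c * x + d)‖ := by ring
      _ ≤ _ := by gcongr

lemma integral_linear_mul_cexp (b c d u v : ℂ) (hb : b.re < 0) :
    ∫ x : ℝ, (u * x + v) * Complex.exp (b * x ^ 2 + c * x + d)
      = (v - u * c / (2 * b)) * ((Real.pi / (-b)) ^ (1/2 : ℂ) * Complex.exp (d - c ^ 2 / (4 * b))) := by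
  have hb0 : b ≠ 0 := fun h => by simp [h] at hb
  have hderiv : ∀ x : ℝ, HasDerivAt (fun y : ℝ => Complex.exp (b * y ^ 2 + c * y + d))
      ((2 * b * x + c) * Complex.exp (b * x ^ 2 + c * x + d)) x := by
    intro x
    have h : HasDerivAt (fun z : ℂ => Complex.exp (b * z ^ 2 + c * z + d))
        ((2 * b * x + c) * Complex.exp (b * (x:ℂ) ^ 2 + c * x + d)) (x : ℂ) := by
      have h1 : HasDerivAt (fun z : ℂ => b * z ^ 2 + c * z + d)
          (2 * b * x + c) (x : ℂ) := by
        have := (((hasDerivAt_pow 2 (x : ℂ)).const_mul b).add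
          ((hasDerivAt_id (x : ℂ)).const_mul c)).add_const d
        refine this.congr_deriv ?_
        simp; ring
      simpa [mul_comm] using h1.cexp
    exact h.comp_ofReal
  have hzero : ∫ x : ℝ, (2 * b * x + c) * Complex.exp (b * x ^ 2 + c * x + d) = 0 := by
    rw [integral_of_hasDerivAt_of_tendsto hderiv
      (integrable_linear_mul_cexp b c d (2*b) c hb)
      (quad_tendsto b c d hb).2 (quad_tendsto b c d hb).1]
    simp
  have hsplit : ∀ x : ℝ, (u * x + v) * Complex.exp (b * x ^ 2 + c * x + d)
      = (u / (2 * b)) * ((2 * b * x + c) * Complex.exp (b * x ^ 2 + c * x + d))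
        + (v - u * c / (2 * b)) * Complex.exp (b * x ^ 2 + c * x + d) := by
    intro x
    field_simp
    ring
  simp_rw [hsplit]
  rw [integral_add ((integrable_linear_mul_cexp b c d (2*b) c hb).const_mul _)
      ((integrable_cexp_quadratic' hb c d).const_mul _),
    integral_const_mul, integral_const_mul, hzero, mul_zero, zero_add,
    integral_cexp_quadratic hb c d]

lemma cmul_norm (a b s t : ℝ) : ((a:ℂ) + (b:ℂ)*Complex.I) * ((s:ℂ) + (t:ℂ)*Complex.I)
    = ((a*s - b*t : ℝ):ℂ) + ((a*t + b*s : ℝ):ℂ)*Complex.I := by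
  push_cast
  linear_combination ((b:ℂ)*(t:ℂ)) * Complex.I_sq

lemma cdiv_norm (a b r : ℝ) : (((a:ℂ) + (b:ℂ)*Complex.I)) / ((r:ℝ):ℂ)
    = ((a/r : ℝ):ℂ) + ((b/r : ℝ):ℂ)*Complex.I := by
  push_cast
  ring

/-- The Gaussian kernel `ρ_G` with parameters `A, B, C, D, E`. -/
noncomputable def rhoG (A B C D E : ℝ) (x y : ℝ) : ℂ :=
  (2 * Real.sqrt (C / Real.pi) : ℝ) *
    Complex.exp (-((A : ℂ) * (x - y) ^ 2 + Complex.I * B * ((x : ℂ) ^ 2 - (y : ℂ) ^ 2) +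
      (C : ℂ) * (x + y) ^ 2 + Complex.I * D * ((x : ℂ) - y) + (E : ℂ) * (x + y) +
      (E : ℂ) ^ 2 / (4 * C)))

open Real in
set_option maxHeartbeats 1000000 in
theorem stmt_10 (A B C D E α₁ β₁ γ₀ : ℝ) (hA : 0 < A) (hC : 0 < C)
    (hab : (α₁, β₁) ≠ (0, 0)) :
    ¬ (∀ f : ℝ → ℂ, MemLp f 2 (volume : Measure ℝ) →
        0 ≤ (∫ x : ℝ, ∫ y : ℝ, (starRingEnd ℂ) (f x) *
          (((α₁ : ℂ) * ((x : ℂ) + y) + Complex.I * β₁ * ((x : ℂ) - y) + γ₀) *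
            rhoG A B C D E x y) * f y).re) := by
  intro h
  -- choice of the shift parameters S, T
  have hden1 : A + 3 * C ≠ 0 := by positivity
  have hden2 : 3 * A + C ≠ 0 := by positivity
  obtain ⟨S, T, hST⟩ : ∃ S T : ℝ,
      γ₀ + α₁ * S / (A + 3 * C) + β₁ * T / (3 * A + C) = -1 := by
    rcases ne_or_eq α₁ 0 with hα | hα
    · refine ⟨-(A + 3 * C) * (1 + γ₀) / α₁, 0, ?_⟩
      field_simp
      ring
    · have hβ : β₁ ≠ 0 := by
        intro hβ
        exact hab (by simp [hα, hβ, Prod.ext_iff])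
      refine ⟨0, -(3 * A + C) * (1 + γ₀) / β₁, ?_⟩
      field_simp
      ring
  -- the test function
  set w : ℂ := Complex.ofReal (-(A + C)) + Complex.ofReal (-B) * Complex.I with hw
  set q : ℂ := Complex.ofReal (S + E) + Complex.ofReal (T - D) * Complex.I with hq
  set f : ℝ → ℂ := fun x => Complex.exp (w * x ^ 2 + q * x) with hf
  have hfmem : MemLp f 2 (volume : Measure ℝ) := by
    have hcont : Continuous f := by
      apply Complex.continuous_exp.comp
      fun_prop
    rw [memLp_two_iff_integrable_sq_norm hcont.aestronglyMeasurable]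
    have heq : (fun x : ℝ => ‖f x‖ ^ 2)
        = fun x : ℝ => ‖Complex.exp ((2*w) * (x:ℂ) ^ 2 + (2*q) * (x:ℂ) + 0)‖ := by
      funext x
      rw [pow_two, ← norm_mul, hf]
      simp only
      rw [← Complex.exp_add]
      congr 2
      ring
    rw [heq]
    refine Integrable.norm ?_
    apply integrable_cexp_quadratic' _ (2*q) 0
    rw [hw]
    simp [Complex.add_re, Complex.mul_re]
    nlinarith
  have hQ := h f hfmem
  -- positivity facts
  have hACpos : (0:ℝ) < A + C := by linarith
  have hACne : ((A:ℂ) + C) ≠ 0 := by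
    exact_mod_cast Complex.ofReal_ne_zero.mpr (ne_of_gt hACpos)
  have hCne : (C:ℂ) ≠ 0 := Complex.ofReal_ne_zero.mpr (ne_of_gt hC)
  set CC : ℝ := 2 * Real.sqrt (C / Real.pi) with hCC
  have hCCpos : 0 < CC := by
    rw [hCC]
    have : 0 < Real.sqrt (C / Real.pi) := Real.sqrt_pos.mpr (div_pos hC Real.pi_pos)
    linarith
  -- the pointwise rewriting of the integrand
  have hpoint : ∀ x y : ℝ,
      (starRingEnd ℂ) (f x) * (((α₁ : ℂ) * ((x : ℂ) + y) + Complex.I * β₁ * ((x : ℂ) - y) + γ₀) *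
          rhoG A B C D E x y) * f y
      = (((CC:ℝ) : ℂ) * ((α₁:ℂ) - Complex.I * β₁) * y
          + ((CC:ℝ) : ℂ) * (((α₁:ℂ) + Complex.I * β₁) * x + γ₀))
        * Complex.exp ((-(2*((A:ℂ)+C))) * (y:ℂ)^2
            + (2*((A:ℂ)-C)*x + (S:ℂ) + Complex.I*T) * y
            + ((-(2*((A:ℂ)+C))) * (x:ℂ)^2 + ((S:ℂ) - Complex.I*T) * x - (E:ℂ)^2/(4*(C:ℂ)))) := by
    intro x y
    have hconj : (starRingEnd ℂ) (f x)
        = Complex.exp ((Complex.ofReal (-(A+C)) - Complex.ofReal (-B) * Complex.I) * (x:ℂ)^2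
          + (Complex.ofReal (S+E) - Complex.ofReal (T-D) * Complex.I) * x) := by
      rw [hf]
      simp only
      rw [← Complex.exp_conj]
      congr 1
      rw [hw, hq]
      simp only [map_add, map_mul, Complex.conj_ofReal, Complex.conj_I, map_pow]
      ring
    rw [hconj]
    simp only [hf, rhoG, hw, hq]
    rw [show ∀ (z1 z2 z3 L R : ℂ), Complex.exp z1 * (L * (R * Complex.exp z2)) * Complex.exp z3
        = (L * R) * Complex.exp (z1 + z2 + z3) from fun z1 z2 z3 L R => by
          rw [Complex.exp_add, Complex.exp_add]; ring]
    congr 1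
    · rw [hCC]; push_cast; ring
    · congr 1
      push_cast
      ring
  have hb : (-(2*((A:ℂ)+C))).re < 0 := by
    simp only [Complex.neg_re, Complex.mul_re, Complex.add_re, Complex.ofReal_re,
      Complex.add_im, Complex.ofReal_im]
    norm_num
    nlinarith
  have hACr : A + C ≠ 0 := by linarith
  have hQne : (A-C)^2 - 4*(A+C)^2 ≠ 0 := by nlinarith
  have hb₂rneg : ((A-C)^2 - 4*(A+C)^2)/(2*(A+C)) < 0 :=
    div_neg_of_neg_of_pos (by nlinarith) (by linarith)
  set b₂r : ℝ := ((A-C)^2 - 4*(A+C)^2)/(2*(A+C)) with hb₂rdef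
  set P₁ : ℂ := ((CC*α₁ + CC*α₁*(A-C)/(2*(A+C)) : ℝ):ℂ)
      + ((CC*β₁ - CC*β₁*(A-C)/(2*(A+C)) : ℝ):ℂ) * Complex.I with hP₁
  set P₀ : ℂ := ((CC*γ₀ + CC*(α₁*S+β₁*T)/(4*(A+C)) : ℝ):ℂ)
      + ((CC*(α₁*T-β₁*S)/(4*(A+C)) : ℝ):ℂ) * Complex.I with hP₀
  set c₂ : ℂ := ((S + (A-C)*S/(2*(A+C)) : ℝ):ℂ)
      + ((-T + (A-C)*T/(2*(A+C)) : ℝ):ℂ) * Complex.I with hc₂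
  set d₂ : ℂ := ((-E^2/(4*C) + (S^2-T^2)/(8*(A+C)) : ℝ):ℂ)
      + ((S*T/(4*(A+C)) : ℝ):ℂ) * Complex.I with hd₂
  have hIO : ∀ x : ℝ,
      (∫ y : ℝ, (starRingEnd ℂ) (f x) * (((α₁ : ℂ) * ((x : ℂ) + y) + Complex.I * β₁ * ((x : ℂ) - y) + γ₀) *
          rhoG A B C D E x y) * f y)
      = ((Real.pi : ℂ) / (2*((A:ℂ)+C))) ^ (1/2 : ℂ)
          * ((P₁ * x + P₀) * Complex.exp ((b₂r:ℂ) * (x:ℂ)^2 + c₂ * x + d₂)) := by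
    intro x
    rw [integral_congr_ae (Filter.Eventually.of_forall (hpoint x)),
      integral_linear_mul_cexp _ _ _ _ _ hb]
    rw [show (-(-(2*((A:ℂ)+C)))) = 2*((A:ℂ)+C) from by ring]
    have hcnorm : (2*((A:ℂ)-C)*(x:ℂ) + (S:ℂ) + Complex.I*(T:ℂ))
        = ((2*(A-C)*x + S : ℝ):ℂ) + ((T:ℝ):ℂ)*Complex.I := by
      push_cast
      ring
    have e1 : ((-(2*((A:ℂ)+C))) * (x:ℂ)^2 + ((S:ℂ) - Complex.I*T) * x - (E:ℂ)^2/(4*(C:ℂ)))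
        - (2*((A:ℂ)-C)*x + (S:ℂ) + Complex.I*T)^2 / (4 * (-(2*((A:ℂ)+C))))
        = (b₂r:ℂ) * (x:ℂ)^2 + c₂ * x + d₂ := by
      rw [hcnorm, pow_two (((2*(A-C)*x + S : ℝ):ℂ) + ((T:ℝ):ℂ)*Complex.I), cmul_norm,
        hc₂, hd₂,
        show (4 * -(2*((A:ℂ)+C))) = ((-(8*(A+C)) : ℝ):ℂ) from by push_cast; ring,
        cdiv_norm,
        show ((E:ℝ):ℂ)^2/(4*((C:ℝ):ℂ)) = ((E^2/(4*C) : ℝ):ℂ) from by push_cast; ring,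
        show (-(2*((A:ℂ)+C))) = ((-(2*(A+C)) : ℝ):ℂ) from by push_cast; ring,
        show ((x:ℝ):ℂ)^2 = ((x^2 : ℝ):ℂ) from by push_cast; ring,
        show ((S:ℝ):ℂ) - Complex.I*((T:ℝ):ℂ) = ((S:ℝ):ℂ) + ((-T:ℝ):ℂ)*Complex.I from by
          push_cast; ring]
      apply Complex.ext <;>
        simp only [Complex.add_re, Complex.add_im, Complex.sub_re, Complex.sub_im,
          Complex.mul_re, Complex.mul_im, Complex.I_re, Complex.I_im,
          Complex.ofReal_re, Complex.ofReal_im, mul_zero, mul_one, zero_mul, sub_zero,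
          zero_sub, add_zero, zero_add, neg_zero] <;>
        ((try rw [hb₂rdef]); (try field_simp); (try ring))
    have e2 : ((CC:ℝ):ℂ) * (((α₁:ℂ) + Complex.I * β₁) * x + γ₀)
        - ((CC:ℝ):ℂ) * ((α₁:ℂ) - Complex.I * β₁) * (2*((A:ℂ)-C)*x + (S:ℂ) + Complex.I*T)
            / (2 * (-(2*((A:ℂ)+C))))
        = P₁ * x + P₀ := by
      rw [hcnorm, show ((CC:ℝ):ℂ) * ((α₁:ℂ) - Complex.I*(β₁:ℂ))
          = ((CC*α₁ : ℝ):ℂ) + ((-(CC*β₁) : ℝ):ℂ)*Complex.I from by push_cast; ring,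
        cmul_norm, hP₁, hP₀,
        show (2 * -(2*((A:ℂ)+C))) = ((-(4*(A+C)) : ℝ):ℂ) from by push_cast; ring,
        cdiv_norm,
        show ((CC:ℝ):ℂ) * (((α₁:ℂ) + Complex.I * (β₁:ℂ)) * (x:ℂ) + (γ₀:ℂ))
          = ((CC*(α₁*x+γ₀) : ℝ):ℂ) + ((CC*β₁*x : ℝ):ℂ)*Complex.I from by push_cast; ring]
      apply Complex.ext <;>
        simp only [Complex.add_re, Complex.add_im, Complex.sub_re, Complex.sub_im,
          Complex.mul_re, Complex.mul_im, Complex.I_re, Complex.I_im,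
          Complex.ofReal_re, Complex.ofReal_im, mul_zero, mul_one, zero_mul, sub_zero,
          zero_sub, add_zero, zero_add, neg_zero] <;>
        (field_simp; ring)
    rw [e1, e2]
    ring
  have hb₂ : ((b₂r : ℝ):ℂ).re < 0 := by
    rw [Complex.ofReal_re]
    exact hb₂rneg
  have hout : (∫ x : ℝ, ∫ y : ℝ, (starRingEnd ℂ) (f x) *
        (((α₁ : ℂ) * ((x : ℂ) + y) + Complex.I * β₁ * ((x : ℂ) - y) + γ₀) *
          rhoG A B C D E x y) * f y)
      = ((Real.pi:ℂ) / (2*((A:ℂ)+C))) ^ (1/2 : ℂ)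
        * ((P₀ - P₁ * c₂ / (2 * (b₂r:ℂ)))
          * (((Real.pi:ℂ) / (-(b₂r:ℂ))) ^ (1/2 : ℂ)
            * Complex.exp (d₂ - c₂^2/(4*(b₂r:ℂ))))) := by
    rw [integral_congr_ae (Filter.Eventually.of_forall hIO), integral_const_mul,
      integral_linear_mul_cexp _ _ _ _ _ hb₂]
  -- scalar identity 1 : the bracket
  have hkey : P₀ - P₁ * c₂ / (2 * (b₂r:ℂ)) = ((-CC : ℝ) : ℂ) := by
    have hre : (CC*γ₀ + CC*(α₁*S+β₁*T)/(4*(A+C)))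
        - ((CC*α₁ + CC*α₁*(A-C)/(2*(A+C)))*(S + (A-C)*S/(2*(A+C)))
            - (CC*β₁ - CC*β₁*(A-C)/(2*(A+C)))*(-T + (A-C)*T/(2*(A+C))))/(2*b₂r)
        = -CC := by
      have h1 : (CC*γ₀ + CC*(α₁*S+β₁*T)/(4*(A+C)))
          - ((CC*α₁ + CC*α₁*(A-C)/(2*(A+C)))*(S + (A-C)*S/(2*(A+C)))
              - (CC*β₁ - CC*β₁*(A-C)/(2*(A+C)))*(-T + (A-C)*T/(2*(A+C))))/(2*b₂r)
          = CC * (γ₀ + α₁ * S / (A + 3 * C) + β₁ * T / (3 * A + C)) := by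
        rw [hb₂rdef]
        field_simp
        ring
      rw [h1, hST]
      ring
    have him : CC*(α₁*T-β₁*S)/(4*(A+C))
        - ((CC*α₁ + CC*α₁*(A-C)/(2*(A+C)))*(-T + (A-C)*T/(2*(A+C)))
            + (CC*β₁ - CC*β₁*(A-C)/(2*(A+C)))*(S + (A-C)*S/(2*(A+C))))/(2*b₂r)
        = 0 := by
      rw [hb₂rdef]
      field_simp
      ring
    rw [hP₀, hP₁, hc₂, cmul_norm,
      show (2 * ((b₂r:ℝ):ℂ)) = ((2*b₂r : ℝ):ℂ) from by push_cast; ring, cdiv_norm]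
    apply Complex.ext
    · simp only [Complex.add_re, Complex.sub_re, Complex.mul_re, Complex.I_re, Complex.I_im,
        Complex.ofReal_re, Complex.ofReal_im, mul_zero, mul_one, zero_mul, sub_zero,
        zero_sub, add_zero, zero_add, neg_zero]
      linear_combination hre
    · simp only [Complex.add_im, Complex.sub_im, Complex.mul_im, Complex.I_re, Complex.I_im,
        Complex.ofReal_re, Complex.ofReal_im, mul_zero, mul_one, zero_mul, sub_zero,
        zero_sub, add_zero, zero_add, neg_zero]
      linear_combination him
  -- scalar identity 2 : the exponent
  have hexp : d₂ - c₂^2/(4*(b₂r:ℂ))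
      = ((S^2/(2*(A+3*C)) - T^2/(2*(3*A+C)) - E^2/(4*C) : ℝ):ℂ) := by
    have hre : (-E^2/(4*C) + (S^2-T^2)/(8*(A+C)))
        - ((S + (A-C)*S/(2*(A+C)))*(S + (A-C)*S/(2*(A+C)))
            - (-T + (A-C)*T/(2*(A+C)))*(-T + (A-C)*T/(2*(A+C))))/(4*b₂r)
        = S^2/(2*(A+3*C)) - T^2/(2*(3*A+C)) - E^2/(4*C) := by
      rw [hb₂rdef]
      field_simp
      ring
    have him : S*T/(4*(A+C))
        - ((S + (A-C)*S/(2*(A+C)))*(-T + (A-C)*T/(2*(A+C)))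
            + (-T + (A-C)*T/(2*(A+C)))*(S + (A-C)*S/(2*(A+C))))/(4*b₂r)
        = 0 := by
      rw [hb₂rdef]
      field_simp
      ring
    rw [hd₂, hc₂, pow_two c₂, hc₂, cmul_norm,
      show (4 * ((b₂r:ℝ):ℂ)) = ((4*b₂r : ℝ):ℂ) from by push_cast; ring, cdiv_norm]
    apply Complex.ext
    · simp only [Complex.add_re, Complex.sub_re, Complex.mul_re, Complex.I_re, Complex.I_im,
        Complex.ofReal_re, Complex.ofReal_im, mul_zero, mul_one, zero_mul, sub_zero,
        zero_sub, add_zero, zero_add, neg_zero]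
      linear_combination hre
    · simp only [Complex.add_im, Complex.sub_im, Complex.mul_im, Complex.I_re, Complex.I_im,
        Complex.ofReal_re, Complex.ofReal_im, mul_zero, mul_one, zero_mul, sub_zero,
        zero_sub, add_zero, zero_add, neg_zero]
      linear_combination him
  -- put everything together
  rw [hout, hkey, hexp] at hQ
  have hmb₂pos : 0 < -b₂r := by linarith
  rw [show ((Real.pi:ℂ)) / (2*((A:ℂ)+C)) = ((Real.pi/(2*(A+C)) : ℝ):ℂ) from by push_cast; ring,
    show ((Real.pi:ℂ)) / (-((b₂r:ℝ):ℂ)) = ((Real.pi/(-b₂r) : ℝ):ℂ) from by push_cast; ring,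
    show (1/2 : ℂ) = (((1:ℝ)/2 : ℝ):ℂ) from by norm_num,
    ← Complex.ofReal_cpow (le_of_lt (div_pos Real.pi_pos (by linarith))) ((1:ℝ)/2),
    ← Complex.ofReal_cpow (le_of_lt (div_pos Real.pi_pos hmb₂pos)) ((1:ℝ)/2),
    ← Complex.ofReal_exp,
    ← Complex.ofReal_mul, ← Complex.ofReal_mul, ← Complex.ofReal_mul,
    Complex.ofReal_re] at hQ
  have c1 : 0 < (Real.pi/(2*(A+C))) ^ ((1:ℝ)/2) :=
    Real.rpow_pos_of_pos (div_pos Real.pi_pos (by linarith)) _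
  have c2 : 0 < (Real.pi/(-b₂r)) ^ ((1:ℝ)/2) :=
    Real.rpow_pos_of_pos (div_pos Real.pi_pos hmb₂pos) _
  have c3 : 0 < Real.exp (S^2/(2*(A+3*C)) - T^2/(2*(3*A+C)) - E^2/(4*C)) := Real.exp_pos _
  nlinarith [mul_pos c1 (mul_pos hCCpos (mul_pos c2 c3))]
end
end

section
/- For the test function $\Psi(x) = \exp(-x^2 + bx + icx)\exp(-iBx^2 + Ex - iDx)$ with $b, c \in \mathbb{R}$, and the kernel $\rho(x,y) = (\alpha_1(x+y)+i\beta_1(x-y)+\gamma_0)\rho_G(x,y)$, the quadratic form $\Pi(b,c) = \int\int \Psi(x)^* \Psi(y) \rho(x,y)\,dx\,dy$ equals a strictly positive factor (depending on $A, C, E, b, c$) times the linear expression $(2A+1)\alpha_1 b + (2C+1)\beta_1 c + (2A+1)(2C+1)\gamma_0$. -/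
open MeasureTheory

/-- The test function `Ψ`. -/
noncomputable def testPsi (B D E b c : ℝ) (x : ℝ) : ℂ :=
  Complex.exp (-(x : ℂ) ^ 2 + (b : ℂ) * x + Complex.I * c * x) *
    Complex.exp (-Complex.I * B * (x : ℂ) ^ 2 + (E : ℂ) * x - Complex.I * D * x)


namespace Stmt11Aux

open Complex Real

lemma integrable_mul_cexp_quadratic {p : ℂ} (hp : p.re < 0) (q r : ℂ) :
    Integrable (fun x : ℝ => (x : ℂ) * Complex.exp (p * x ^ 2 + q * x + r)) := by
  have h1 := (integrable_cexp_quadratic' hp (q + 1) r).norm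
  have h2 := (integrable_cexp_quadratic' hp (q - 1) r).norm
  refine Integrable.mono' (h1.add h2) ?_ ?_
  · exact (Complex.continuous_ofReal.mul
      (Complex.continuous_exp.comp (by continuity))).aestronglyMeasurable
  · filter_upwards with x
    have hx : |x| ≤ Real.exp x + Real.exp (-x) := by
      rcases le_or_gt 0 x with h | h
      · rw [_root_.abs_of_nonneg h]
        calc x ≤ Real.exp x := (Real.add_one_le_exp x).trans' (by linarith)
        _ ≤ _ := le_add_of_nonneg_right (Real.exp_pos _).le
      · rw [abs_of_neg h]
        calc -x ≤ Real.exp (-x) := (Real.add_one_le_exp (-x)).trans' (by linarith)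
        _ ≤ _ := le_add_of_nonneg_left (Real.exp_pos _).le
    have hnorm : ∀ (z : ℂ), ‖Complex.exp z‖ = Real.exp z.re := fun z => Complex.norm_exp z
    simp only [Pi.add_apply, norm_mul, Complex.norm_real, hnorm, Real.norm_eq_abs]
    have e1 : ((p * x ^ 2 + (q + 1) * x + r).re) = (p * x ^ 2 + q * x + r).re + x := by
      simp [Complex.add_re, Complex.mul_re]; ring
    have e2 : ((p * x ^ 2 + (q - 1) * x + r).re) = (p * x ^ 2 + q * x + r).re + (-x) := by
      simp [Complex.add_re, Complex.sub_re, Complex.mul_re]; ring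
    rw [e1, e2, Real.exp_add, Real.exp_add]
    calc |x| * Real.exp ((p * x ^ 2 + q * x + r).re)
        ≤ (Real.exp x + Real.exp (-x)) * Real.exp ((p * x ^ 2 + q * x + r).re) :=
          mul_le_mul_of_nonneg_right hx (Real.exp_pos _).le
      _ = _ := by ring

lemma integral_mul_cexp_quadratic' {p : ℂ} (hp : p.re < 0) (q r : ℂ) :
    ∫ x : ℝ, (x : ℂ) * Complex.exp (p * x ^ 2 + q * x + r) =
      (-q / (2 * p)) * ((↑Real.pi / -p) ^ (1 / 2 : ℂ) * Complex.exp (r - q ^ 2 / (4 * p))) := by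
  have hp0 : p ≠ 0 := by intro h; rw [h] at hp; simp at hp
  have hzero : ∫ x : ℝ, ((2 * p) * x + q) * Complex.exp (p * x ^ 2 + q * x + r) = 0 := by
    apply integral_eq_zero_of_hasDerivAt_of_integrable
      (f := fun x : ℝ => Complex.exp (p * x ^ 2 + q * x + r))
    · intro x
      have : HasDerivAt (fun z : ℂ => Complex.exp (p * z ^ 2 + q * z + r))
          ((2 * p * x + q) * Complex.exp (p * (x:ℂ) ^ 2 + q * x + r)) (x : ℂ) := by
        have h1 : HasDerivAt (fun z : ℂ => p * z ^ 2 + q * z + r) (2 * p * x + q) (x : ℂ) := by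
          have := (((hasDerivAt_pow 2 (x:ℂ)).const_mul p).add
            ((hasDerivAt_id (x:ℂ)).const_mul q)).add_const r
          refine this.congr_deriv ?_
          simp; ring
        simpa [mul_comm] using h1.cexp
      exact this.comp_ofReal
    · have h1 := (integrable_mul_cexp_quadratic hp q r).const_mul (2 * p)
      have h2 := (integrable_cexp_quadratic' hp q r).const_mul q
      refine (h1.add h2).congr (ae_of_all _ fun x => ?_)
      simp only [Pi.add_apply]
      ring
    · exact integrable_cexp_quadratic' hp q r
  have hsplit : ∫ x : ℝ, ((2 * p) * x + q) * Complex.exp (p * x ^ 2 + q * x + r) =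
      (2 * p) * (∫ x : ℝ, (x : ℂ) * Complex.exp (p * x ^ 2 + q * x + r)) +
      q * ∫ x : ℝ, Complex.exp (p * x ^ 2 + q * x + r) := by
    rw [← integral_const_mul, ← integral_const_mul, ← integral_add
      ((integrable_mul_cexp_quadratic hp q r).const_mul _)
      ((integrable_cexp_quadratic' hp q r).const_mul _)]
    congr 1; funext x; ring
  rw [hsplit, integral_cexp_quadratic hp] at hzero
  field_simp at hzero ⊢
  linear_combination hzero

lemma lin_gauss {p : ℂ} (hp : p.re < 0) (q r P Q : ℂ) :
    ∫ x : ℝ, (P + Q * x) * Complex.exp (p * x ^ 2 + q * x + r) =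
      (P - Q * q / (2 * p)) *
        ((↑Real.pi / -p) ^ (1 / 2 : ℂ) * Complex.exp (r - q ^ 2 / (4 * p))) := by
  have hp0 : p ≠ 0 := by intro h; rw [h] at hp; simp at hp
  have : ∫ x : ℝ, (P + Q * x) * Complex.exp (p * x ^ 2 + q * x + r) =
      P * (∫ x : ℝ, Complex.exp (p * x ^ 2 + q * x + r)) +
      Q * ∫ x : ℝ, (x : ℂ) * Complex.exp (p * x ^ 2 + q * x + r) := by
    rw [← integral_const_mul, ← integral_const_mul, ← integral_add
      ((integrable_cexp_quadratic' hp q r).const_mul _)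
      ((integrable_mul_cexp_quadratic hp q r).const_mul _)]
    congr 1; funext x; ring
  rw [this, integral_cexp_quadratic hp, integral_mul_cexp_quadratic' hp]
  field_simp
  ring

lemma merge_aux (a1 a2 a3 a4 a5 b1 b2 R L M : ℂ) (h : a1 + a2 + a3 + a4 + a5 = b1 + b2)
    (hL : L = M) :
    Complex.exp a1 * Complex.exp a2 * (Complex.exp a3 * Complex.exp a4) *
      (L * (R * Complex.exp a5)) = (R * Complex.exp b1) * (M * Complex.exp b2) := by
  subst hL
  calc Complex.exp a1 * Complex.exp a2 * (Complex.exp a3 * Complex.exp a4) *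
      (L * (R * Complex.exp a5))
      = (R * L) * (Complex.exp a1 * Complex.exp a2 * Complex.exp a3 * Complex.exp a4 *
        Complex.exp a5) := by ring
    _ = (R * L) * Complex.exp (a1 + a2 + a3 + a4 + a5) := by
        rw [← Complex.exp_add, ← Complex.exp_add, ← Complex.exp_add, ← Complex.exp_add]
    _ = (R * L) * Complex.exp (b1 + b2) := by rw [h]
    _ = _ := by rw [Complex.exp_add]; ring

lemma key1 (u S N₁ N₂ : ℂ) (hS : S ≠ 0) :
    (u/S)^2/(4*(-(N₁*N₂/S))) = -(u^2/(4*S*N₁*N₂)) := by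
  rw [div_pow, show (4*(-(N₁*N₂/S))) = -(4*N₁*N₂)/S from by ring, div_div_eq_mul_div,
    div_neg, ← neg_div, neg_div, neg_inj, div_mul_eq_mul_div, pow_two S,
    mul_div_mul_right _ _ hS, div_div, show S*(4*N₁*N₂) = 4*S*N₁*N₂ from by ring]

lemma key2 (u v S N₁ N₂ : ℂ) (hS : S ≠ 0) :
    (u/S)*(v/S)/(2*(-(N₁*N₂/S))) = -(u*v/(2*S*N₁*N₂)) := by
  rw [div_mul_div_comm, show (2*(-(N₁*N₂/S))) = -(2*N₁*N₂)/S from by ring, div_div_eq_mul_div,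
    div_neg, ← neg_div, neg_div, neg_inj, div_mul_eq_mul_div,
    mul_div_mul_right _ _ hS, div_div, show S*(2*N₁*N₂) = 2*S*N₁*N₂ from by ring]

lemma combo1 (w u S N₁ N₂ : ℂ) (hS : S ≠ 0) (hN1 : N₁ ≠ 0) (hN2 : N₂ ≠ 0) :
    w^2/(4*S) - (u/S)^2/(4*(-(N₁*N₂/S))) = (N₁*N₂*w^2 + u^2) / (4*S*N₁*N₂) := by
  have h1 : (4:ℂ)*S ≠ 0 := by exact mul_ne_zero (by norm_num) hS
  have h2 : (4:ℂ)*S*N₁*N₂ ≠ 0 := by exact mul_ne_zero (mul_ne_zero h1 hN1) hN2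
  rw [key1 _ _ _ _ hS, sub_neg_eq_add, div_add_div _ _ h1 h2,
    div_eq_div_iff (mul_ne_zero h1 h2) h2]
  ring

lemma combo2 (g t u v S N₁ N₂ : ℂ) (hS : S ≠ 0) (hN1 : N₁ ≠ 0) (hN2 : N₂ ≠ 0) :
    g + t/(2*S) - (u/S)*(v/S)/(2*(-(N₁*N₂/S))) =
      (2*S*N₁*N₂*g + N₁*N₂*t + u*v)/(2*S*N₁*N₂) := by
  have h1 : (2:ℂ)*S ≠ 0 := by exact mul_ne_zero (by norm_num) hS
  have h2 : (2:ℂ)*S*N₁*N₂ ≠ 0 := by exact mul_ne_zero (mul_ne_zero h1 hN1) hN2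
  rw [key2 _ _ _ _ _ hS, sub_neg_eq_add, add_assoc, div_add_div _ _ h1 h2,
    add_div' _ _ _ (mul_ne_zero h1 h2), div_eq_div_iff (mul_ne_zero h1 h2) h2]
  ring

end Stmt11Aux

open Stmt11Aux in
set_option maxHeartbeats 2000000 in
theorem stmt_11 (A B C D E α₁ β₁ γ₀ b c : ℝ) (hA : 0 < A) (hC : 0 < C) :
    (0 : ℝ) < 2 * Real.sqrt (Real.pi * C) * Real.exp (-E ^ 2 / (4 * C)) *
        ((2 * A + 1) * (2 * C + 1)) ^ (-(3 : ℝ) / 2) *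
        Real.exp ((2 * A * b ^ 2 - 2 * C * c ^ 2 + b ^ 2 - c ^ 2) /
          (2 * (4 * A * C + 2 * A + 2 * C + 1))) ∧
    (∫ x : ℝ, ∫ y : ℝ, (starRingEnd ℂ) (testPsi B D E b c x) * testPsi B D E b c y *
        (((α₁ : ℂ) * ((x : ℂ) + y) + Complex.I * β₁ * ((x : ℂ) - y) + γ₀) *
          rhoG A B C D E x y)) =
      ((2 * Real.sqrt (Real.pi * C) * Real.exp (-E ^ 2 / (4 * C)) *
          ((2 * A + 1) * (2 * C + 1)) ^ (-(3 : ℝ) / 2) *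
          Real.exp ((2 * A * b ^ 2 - 2 * C * c ^ 2 + b ^ 2 - c ^ 2) /
            (2 * (4 * A * C + 2 * A + 2 * C + 1))) : ℝ) : ℂ) *
        (((2 * A + 1) * α₁ * b + (2 * C + 1) * β₁ * c +
          (2 * A + 1) * (2 * C + 1) * γ₀ : ℝ) : ℂ) := by
  have hN1 : (0:ℝ) < 2*A+1 := by linarith
  have hN2 : (0:ℝ) < 2*C+1 := by linarith
  have hSr : (0:ℝ) < A+C+1 := by linarith
  have hSc : ((A:ℂ)+(C:ℂ)+1) ≠ 0 := by
    rw [show ((A:ℂ)+(C:ℂ)+1) = ((A+C+1 : ℝ) : ℂ) by push_cast; ring]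
    exact_mod_cast hSr.ne'
  refine ⟨?_, ?_⟩
  · have h1 : 0 < Real.sqrt (Real.pi*C) := Real.sqrt_pos.mpr (mul_pos Real.pi_pos hC)
    have h2 : (0:ℝ) < ((2*A+1)*(2*C+1)) ^ (-(3:ℝ)/2) :=
      Real.rpow_pos_of_pos (mul_pos hN1 hN2) _
    positivity
  have hβre : ((-((A:ℂ)+C+1))).re < 0 := by
    simp only [Complex.neg_re, Complex.add_re, Complex.ofReal_re, Complex.one_re]
    linarith
  have hβne : ((-((A:ℂ)+C+1))) ≠ 0 := neg_ne_zero.mpr hSc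
  have hp2eq : (-((2*(A:ℂ)+1)*(2*(C:ℂ)+1)/((A:ℂ)+C+1))) =
      ((-((2*A+1)*(2*C+1)/(A+C+1)) : ℝ) : ℂ) := by push_cast; ring
  have hp2pos : (0:ℝ) < (2*A+1)*(2*C+1)/(A+C+1) := div_pos (mul_pos hN1 hN2) hSr
  have hp2re : ((-((2*(A:ℂ)+1)*(2*(C:ℂ)+1)/((A:ℂ)+C+1)))).re < 0 := by
    rw [hp2eq, Complex.ofReal_re]; linarith
  have hp2ne : ((-((2*(A:ℂ)+1)*(2*(C:ℂ)+1)/((A:ℂ)+C+1)))) ≠ 0 := by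
    rw [hp2eq]
    exact_mod_cast (show -((2*A+1)*(2*C+1)/(A+C+1)) ≠ 0 by linarith)
  have step1 : ∀ x y : ℝ,
      (starRingEnd ℂ) (testPsi B D E b c x) * testPsi B D E b c y *
        (((α₁ : ℂ) * ((x : ℂ) + y) + Complex.I * β₁ * ((x : ℂ) - y) + γ₀) *
          rhoG A B C D E x y) =
      (((2 * Real.sqrt (C / Real.pi) : ℝ) : ℂ) * Complex.exp (((-E^2/(4*C) : ℝ) : ℂ))) *
        (((((α₁:ℂ) + Complex.I*β₁) * x + γ₀) + ((α₁:ℂ) - Complex.I*β₁) * y) *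
          Complex.exp ((-((A:ℂ)+C+1)) * (y:ℂ)^2 +
            (2*((A:ℂ)-C) * x + b + Complex.I*c) * (y:ℂ) +
            ((-((A:ℂ)+C+1)) * (x:ℂ)^2 + ((b:ℂ) - Complex.I*c) * (x:ℂ)))) := by
    intro x y
    simp only [testPsi, rhoG, map_mul, ← Complex.exp_conj]
    exact merge_aux _ _ _ _ _ _ _ _ _ _
      (by simp only [map_add, map_neg, map_sub, map_mul, map_pow, map_div₀, map_ofNat,
            Complex.conj_I, Complex.conj_ofReal]
          push_cast; ring)
      (by push_cast; ring)
  calc (∫ x : ℝ, ∫ y : ℝ, (starRingEnd ℂ) (testPsi B D E b c x) * testPsi B D E b c y *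
        (((α₁ : ℂ) * ((x : ℂ) + y) + Complex.I * β₁ * ((x : ℂ) - y) + γ₀) *
          rhoG A B C D E x y))
      = ∫ x : ℝ, (((2 * Real.sqrt (C / Real.pi) : ℝ) : ℂ) *
          Complex.exp (((-E^2/(4*C) : ℝ) : ℂ))) *
          (((((α₁:ℂ) + Complex.I*β₁) * x + γ₀) -
              ((α₁:ℂ) - Complex.I*β₁) * (2*((A:ℂ)-C) * x + b + Complex.I*c) /
                (2 * (-((A:ℂ)+C+1)))) *
            ((↑Real.pi / -(-((A:ℂ)+C+1))) ^ (1 / 2 : ℂ) *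
              Complex.exp (((-((A:ℂ)+C+1)) * (x:ℂ)^2 + ((b:ℂ) - Complex.I*c) * (x:ℂ)) -
                (2*((A:ℂ)-C) * x + b + Complex.I*c) ^ 2 / (4 * (-((A:ℂ)+C+1)))))) := by
        congr 1; funext x
        rw [show (∫ y : ℝ, (starRingEnd ℂ) (testPsi B D E b c x) * testPsi B D E b c y *
            (((α₁ : ℂ) * ((x : ℂ) + y) + Complex.I * β₁ * ((x : ℂ) - y) + γ₀) *
              rhoG A B C D E x y)) =
          ∫ y : ℝ, (((2 * Real.sqrt (C / Real.pi) : ℝ) : ℂ) *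
              Complex.exp (((-E^2/(4*C) : ℝ) : ℂ))) *
            (((((α₁:ℂ) + Complex.I*β₁) * x + γ₀) + ((α₁:ℂ) - Complex.I*β₁) * y) *
              Complex.exp ((-((A:ℂ)+C+1)) * (y:ℂ)^2 +
                (2*((A:ℂ)-C) * x + b + Complex.I*c) * (y:ℂ) +
                ((-((A:ℂ)+C+1)) * (x:ℂ)^2 + ((b:ℂ) - Complex.I*c) * (x:ℂ)))) from by
          congr 1; funext y; exact step1 x y]
        rw [integral_const_mul, lin_gauss hβre]
    _ = ∫ x : ℝ, ((((2 * Real.sqrt (C / Real.pi) : ℝ) : ℂ) *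
          Complex.exp (((-E^2/(4*C) : ℝ) : ℂ))) *
          ((↑Real.pi / -(-((A:ℂ)+C+1))) ^ (1 / 2 : ℂ))) *
          ((((γ₀:ℂ) + ((α₁:ℂ) - Complex.I*β₁)*((b:ℂ) + Complex.I*c) / (2*((A:ℂ)+C+1))) +
              (((2*(A:ℂ)+1)*α₁ + Complex.I*(2*(C:ℂ)+1)*β₁) / ((A:ℂ)+C+1)) * x) *
            Complex.exp (((-((2*(A:ℂ)+1)*(2*(C:ℂ)+1)/((A:ℂ)+C+1)))) * (x:ℂ)^2 +
              (((2*(A:ℂ)+1)*b - Complex.I*((2*(C:ℂ)+1))*c) / ((A:ℂ)+C+1)) * (x:ℂ) +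
              ((b:ℂ) + Complex.I*c)^2 / (4*((A:ℂ)+C+1)))) := by
        congr 1; funext x
        have hpre : ((((α₁:ℂ) + Complex.I*β₁) * x + γ₀) -
              ((α₁:ℂ) - Complex.I*β₁) * (2*((A:ℂ)-C) * x + b + Complex.I*c) /
                (2 * (-((A:ℂ)+C+1)))) =
            (((γ₀:ℂ) + ((α₁:ℂ) - Complex.I*β₁)*((b:ℂ) + Complex.I*c) / (2*((A:ℂ)+C+1))) +
              (((2*(A:ℂ)+1)*α₁ + Complex.I*(2*(C:ℂ)+1)*β₁) / ((A:ℂ)+C+1)) * x) := by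
          simp only [mul_neg, div_neg, sub_neg_eq_add, neg_neg, neg_mul]
          field_simp [hSc]
          ring
        have harg : (((-((A:ℂ)+C+1)) * (x:ℂ)^2 + ((b:ℂ) - Complex.I*c) * (x:ℂ)) -
              (2*((A:ℂ)-C) * x + b + Complex.I*c) ^ 2 / (4 * (-((A:ℂ)+C+1)))) =
            (((-((2*(A:ℂ)+1)*(2*(C:ℂ)+1)/((A:ℂ)+C+1)))) * (x:ℂ)^2 +
              (((2*(A:ℂ)+1)*b - Complex.I*((2*(C:ℂ)+1))*c) / ((A:ℂ)+C+1)) * (x:ℂ) +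
              ((b:ℂ) + Complex.I*c)^2 / (4*((A:ℂ)+C+1))) := by
          simp only [mul_neg, div_neg, sub_neg_eq_add, neg_neg, neg_mul]
          field_simp [hSc]
          ring
        rw [hpre, harg]
        ring
    _ = ((((2 * Real.sqrt (C / Real.pi) : ℝ) : ℂ) *
          Complex.exp (((-E^2/(4*C) : ℝ) : ℂ))) *
          ((↑Real.pi / -(-((A:ℂ)+C+1))) ^ (1 / 2 : ℂ))) *
          ((((γ₀:ℂ) + ((α₁:ℂ) - Complex.I*β₁)*((b:ℂ) + Complex.I*c) / (2*((A:ℂ)+C+1))) -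
              (((2*(A:ℂ)+1)*α₁ + Complex.I*(2*(C:ℂ)+1)*β₁) / ((A:ℂ)+C+1)) *
                (((2*(A:ℂ)+1)*b - Complex.I*((2*(C:ℂ)+1))*c) / ((A:ℂ)+C+1)) /
                (2 * ((-((2*(A:ℂ)+1)*(2*(C:ℂ)+1)/((A:ℂ)+C+1)))))) *
            ((↑Real.pi / -((-((2*(A:ℂ)+1)*(2*(C:ℂ)+1)/((A:ℂ)+C+1))))) ^ (1 / 2 : ℂ) *
              Complex.exp (((b:ℂ) + Complex.I*c)^2 / (4*((A:ℂ)+C+1)) -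
                (((2*(A:ℂ)+1)*b - Complex.I*((2*(C:ℂ)+1))*c) / ((A:ℂ)+C+1)) ^ 2 /
                  (4 * ((-((2*(A:ℂ)+1)*(2*(C:ℂ)+1)/((A:ℂ)+C+1)))))))) := by
        rw [integral_const_mul, lin_gauss hp2re]
    _ = _ := by
        have hN1c : (2*(A:ℂ)+1) ≠ 0 := by
          rw [show (2*(A:ℂ)+1) = ((2*A+1 : ℝ):ℂ) by push_cast; ring]
          exact_mod_cast hN1.ne'
        have hN2c : (2*(C:ℂ)+1) ≠ 0 := by
          rw [show (2*(C:ℂ)+1) = ((2*C+1 : ℝ):ℂ) by push_cast; ring]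
          exact_mod_cast hN2.ne'
        have hlin : (((γ₀:ℂ) + ((α₁:ℂ) - Complex.I*β₁)*((b:ℂ) + Complex.I*c) / (2*((A:ℂ)+C+1))) -
              (((2*(A:ℂ)+1)*α₁ + Complex.I*(2*(C:ℂ)+1)*β₁) / ((A:ℂ)+C+1)) *
                (((2*(A:ℂ)+1)*b - Complex.I*((2*(C:ℂ)+1))*c) / ((A:ℂ)+C+1)) /
                (2 * ((-((2*(A:ℂ)+1)*(2*(C:ℂ)+1)/((A:ℂ)+C+1)))))) =
            ((((2*A+1)*α₁*b + (2*C+1)*β₁*c + (2*A+1)*(2*C+1)*γ₀) / ((2*A+1)*(2*C+1)) : ℝ) : ℂ) := by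
          rw [combo2 _ _ _ _ _ _ _ hSc hN1c hN2c, Complex.ofReal_div, div_eq_div_iff
            (by exact mul_ne_zero (mul_ne_zero (mul_ne_zero (by norm_num) hSc) hN1c) hN2c)
            (by exact_mod_cast (mul_pos hN1 hN2).ne')]
          push_cast
          linear_combination
            (-(2*((A:ℂ)+C+1)*(2*(A:ℂ)+1)*(2*(C:ℂ)+1)*(2*(C:ℂ)+1)*(β₁:ℂ)*(c:ℂ))) * Complex.I_sq
        have hexp : (((b:ℂ) + Complex.I*c)^2 / (4*((A:ℂ)+C+1)) -
              (((2*(A:ℂ)+1)*b - Complex.I*((2*(C:ℂ)+1))*c) / ((A:ℂ)+C+1)) ^ 2 /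
                (4 * ((-((2*(A:ℂ)+1)*(2*(C:ℂ)+1)/((A:ℂ)+C+1)))))) =
            (((2*A*b^2 - 2*C*c^2 + b^2 - c^2) / (2*(4*A*C+2*A+2*C+1)) : ℝ) : ℂ) := by
          rw [combo1 _ _ _ _ _ hSc hN1c hN2c, Complex.ofReal_div, div_eq_div_iff
            (by exact mul_ne_zero (mul_ne_zero (mul_ne_zero (by norm_num) hSc) hN1c) hN2c)
            (by exact_mod_cast (show (2*(4*A*C+2*A+2*C+1) : ℝ) ≠ 0 by nlinarith))]
          push_cast
          linear_combination
            (4*((A:ℂ)+C+1)*(2*(A:ℂ)+1)*(2*(C:ℂ)+1)*(2*(C:ℂ)+1)*(c:ℂ)^2) * Complex.I_sq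
        have hCc1 : (↑Real.pi / -(-((A:ℂ)+C+1))) ^ (1/2 : ℂ) =
            ((Real.sqrt Real.pi / Real.sqrt (A+C+1) : ℝ) : ℂ) := by
          rw [neg_neg, show (↑Real.pi / ((A:ℂ)+C+1)) = ((Real.pi/(A+C+1) : ℝ) : ℂ) by
              push_cast; ring,
            show (1/2 : ℂ) = ((1/2 : ℝ) : ℂ) by norm_num,
            ← Complex.ofReal_cpow (le_of_lt (div_pos Real.pi_pos hSr))]
          rw [← Real.sqrt_eq_rpow, Real.sqrt_div Real.pi_pos.le]
        have hCc2 : (↑Real.pi / -(-((2*(A:ℂ)+1)*(2*(C:ℂ)+1)/((A:ℂ)+C+1)))) ^ (1/2 : ℂ) =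
            ((Real.sqrt Real.pi * Real.sqrt (A+C+1) /
              (Real.sqrt (2*A+1) * Real.sqrt (2*C+1)) : ℝ) : ℂ) := by
          rw [neg_neg, show ((↑Real.pi / ((2*(A:ℂ)+1)*(2*(C:ℂ)+1)/((A:ℂ)+C+1)))) =
              ((Real.pi*(A+C+1)/((2*A+1)*(2*C+1)) : ℝ) : ℂ) by
              push_cast
              rw [div_div_eq_mul_div],
            show (1/2 : ℂ) = ((1/2 : ℝ) : ℂ) by norm_num,
            ← Complex.ofReal_cpow (by positivity)]
          rw [← Real.sqrt_eq_rpow, Real.sqrt_div (by positivity), Real.sqrt_mul Real.pi_pos.le,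
            Real.sqrt_mul hN1.le]
        rw [hlin, hexp, hCc1, hCc2]
        rw [show Complex.exp (((-E^2/(4*C) : ℝ) : ℂ)) = ((Real.exp (-E^2/(4*C)) : ℝ) : ℂ) from
          (Complex.ofReal_exp _).symm]
        rw [show Complex.exp ((((2*A*b^2 - 2*C*c^2 + b^2 - c^2) /
            (2*(4*A*C+2*A+2*C+1)) : ℝ) : ℂ)) =
          ((Real.exp ((2*A*b^2 - 2*C*c^2 + b^2 - c^2) / (2*(4*A*C+2*A+2*C+1))) : ℝ) : ℂ) from
          (Complex.ofReal_exp _).symm]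
        have hrpow : ((2*A+1)*(2*C+1) : ℝ) ^ (-(3:ℝ)/2) =
            1/(((2*A+1)*(2*C+1)) * (Real.sqrt (2*A+1) * Real.sqrt (2*C+1))) := by
          have hN : (0:ℝ) < (2*A+1)*(2*C+1) := mul_pos hN1 hN2
          rw [show (-(3:ℝ)/2) = -(3/2:ℝ) by norm_num, Real.rpow_neg hN.le,
            show (3/2:ℝ) = 1 + 1/2 by norm_num, Real.rpow_add hN, Real.rpow_one,
            ← Real.sqrt_eq_rpow, Real.sqrt_mul hN1.le, one_div]
        rw [hrpow, Real.sqrt_mul Real.pi_pos.le, Real.sqrt_div hC.le]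
        norm_cast
        have hsp : (0:ℝ) < Real.sqrt Real.pi := Real.sqrt_pos.mpr Real.pi_pos
        have hsS : (0:ℝ) < Real.sqrt (A+C+1) := Real.sqrt_pos.mpr hSr
        have hsN1 : (0:ℝ) < Real.sqrt (2*A+1) := Real.sqrt_pos.mpr hN1
        have hsN2 : (0:ℝ) < Real.sqrt (2*C+1) := Real.sqrt_pos.mpr hN2
        field_simp
end

section
/- Let $(\lambda_n)$ be an absolutely summable real sequence with power sums $M_k = \sum_n \lambda_n^k$ (finite for all $k \ge 1$) and elementary symmetric functions $e_k$. Then Newton's identities hold: for every $k \ge 1$, $k\, e_k = \sum_{j=1}^{k} (-1)^{j-1} e_{k-j} M_j$, where $e_0 = 1$. -/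
open Finset Filter Topology

/-- esymm of a nonneg function over a finset is at most (sum)^k. -/
lemma esymm_le_pow_aux (f : ℕ → ℝ) (hf : ∀ i, 0 ≤ f i) (s : Finset ℕ) :
    ∀ k : ℕ, ∑ t ∈ s.powersetCard k, ∏ i ∈ t, f i ≤ (∑ i ∈ s, f i) ^ k := by
  classical
  induction s using Finset.induction_on with
  | empty =>
    intro k
    cases k with
    | zero => simp
    | succ n => simp [Finset.powersetCard_eq_filter, Finset.powerset_empty, Finset.filter_singleton]
  | @insert a s ha ih =>
    intro k
    cases k with
    | zero => simp
    | succ n =>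
      rw [Finset.powersetCard_succ_insert ha]
      have hdisj : Disjoint (s.powersetCard (n+1)) ((s.powersetCard n).image (insert a)) := by
        rw [Finset.disjoint_left]
        intro t ht ht'
        obtain ⟨u, hu, rfl⟩ := Finset.mem_image.mp ht'
        have := (Finset.mem_powersetCard.mp ht).1
        exact ha (this (Finset.mem_insert_self a u))
      rw [Finset.sum_union hdisj]
      have himg : ∑ t ∈ (s.powersetCard n).image (insert a), ∏ i ∈ t, f i
          = ∑ t ∈ s.powersetCard n, f a * ∏ i ∈ t, f i := by
        rw [Finset.sum_image]
        · refine Finset.sum_congr rfl fun t ht => ?_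
          have hat : a ∉ t := fun hat => ha ((Finset.mem_powersetCard.mp ht).1 hat)
          rw [Finset.prod_insert hat]
        · intro x hx y hy hxy
          have hax : a ∉ x := fun h => ha ((Finset.mem_powersetCard.mp hx).1 h)
          have hay : a ∉ y := fun h => ha ((Finset.mem_powersetCard.mp hy).1 h)
          have := congrArg (fun t : Finset ℕ => t.erase a) hxy
          simpa [Finset.erase_insert hax, Finset.erase_insert hay] using this
      rw [himg, ← Finset.mul_sum, Finset.sum_insert ha]
      set S := ∑ i ∈ s, f i with hS
      have hS0 : 0 ≤ S := Finset.sum_nonneg fun i _ => hf i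
      calc ∑ t ∈ s.powersetCard (n+1), ∏ i ∈ t, f i + f a * ∑ t ∈ s.powersetCard n, ∏ i ∈ t, f i
          ≤ S ^ (n+1) + f a * S ^ n := by
            gcongr
            · exact ih (n+1)
            · exact hf a
            · exact ih n
        _ = (f a + S) * S ^ n := by ring
        _ ≤ (f a + S) * (f a + S) ^ n := by
            gcongr
            · linarith [hf a]
            · linarith [hf a]
        _ = (f a + S) ^ (n+1) := by ring

/-- Summability of the family of products over card-k finsets. -/
lemma summable_prod_card (lam : ℕ → ℝ) (hsum : Summable (fun n => |lam n|)) (k : ℕ) :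
    Summable (fun s : {s : Finset ℕ // s.card = k} => ∏ i ∈ s.1, |lam i|) := by
  set C : ℝ := ∑' n, |lam n| with hC
  have hnn : (0 : {s : Finset ℕ // s.card = k} → ℝ) ≤ fun s => ∏ i ∈ s.1, |lam i| :=
    fun s => Finset.prod_nonneg fun i _ => abs_nonneg _
  refine summable_of_sum_le (c := C ^ k) hnn ?_
  intro u
  obtain ⟨N, hN⟩ := (u.sup (fun s => s.1)).exists_nat_subset_range
  have hsub : u.image Subtype.val ⊆ (Finset.range N).powersetCard k := by
    intro t ht
    obtain ⟨s, hs, rfl⟩ := Finset.mem_image.mp ht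
    rw [Finset.mem_powersetCard]
    exact ⟨(Finset.le_sup hs).trans hN, s.2⟩
  calc ∑ s ∈ u, ∏ i ∈ s.1, |lam i|
      = ∑ t ∈ u.image Subtype.val, ∏ i ∈ t, |lam i| := by
        rw [Finset.sum_image (fun x _ y _ h => Subtype.ext h)]
    _ ≤ ∑ t ∈ (Finset.range N).powersetCard k, ∏ i ∈ t, |lam i| :=
        Finset.sum_le_sum_of_subset_of_nonneg hsub
          (fun t _ _ => Finset.prod_nonneg fun i _ => abs_nonneg _)
    _ ≤ (∑ i ∈ Finset.range N, |lam i|) ^ k := esymm_le_pow_aux _ (fun i => abs_nonneg _) _ k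
    _ ≤ (∑' n, |lam n|) ^ k :=
        pow_le_pow_left₀ (Finset.sum_nonneg fun i _ => abs_nonneg _)
          (Summable.sum_le_tsum (Finset.range N) (fun i _ => abs_nonneg _) hsum) k

lemma summable_esymm (lam : ℕ → ℝ) (hsum : Summable (fun n => |lam n|)) (k : ℕ) :
    Summable (fun s : {s : Finset ℕ // s.card = k} => ∏ i ∈ s.1, lam i) := by
  refine Summable.of_abs ?_
  have : (fun s : {s : Finset ℕ // s.card = k} => |∏ i ∈ s.1, lam i|)
      = fun s => ∏ i ∈ s.1, |lam i| := by
    funext s; exact Finset.abs_prod _ _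
  rw [this]
  exact summable_prod_card lam hsum k

/-- The truncated esymm converges to esymm. -/
lemma tendsto_esymm (lam : ℕ → ℝ) (hsum : Summable (fun n => |lam n|)) (k : ℕ) :
    Tendsto (fun N => ∑ t ∈ (Finset.range N).powersetCard k, ∏ i ∈ t, lam i)
      atTop (𝓝 (esymm lam k)) := by
  classical
  have hs := (summable_esymm lam hsum k).hasSum
  set F : ℕ → Finset {s : Finset ℕ // s.card = k} :=
    fun N => ((Finset.range N).powerset).subtype (fun s => s.card = k) with hF
  have hmono : Monotone F := by
    intro a b hab s hs
    rw [Finset.mem_subtype] at hs ⊢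
    exact Finset.powerset_mono.mpr (Finset.range_subset_range.mpr hab) hs
  have hcover : ∀ s : {s : Finset ℕ // s.card = k}, ∃ N, s ∈ F N := by
    intro s
    obtain ⟨N, hN⟩ := s.1.exists_nat_subset_range
    exact ⟨N, Finset.mem_subtype.mpr (Finset.mem_powerset.mpr hN)⟩
  have htend : Tendsto F atTop atTop := tendsto_atTop_finset_of_monotone hmono hcover
  have := hs.comp htend
  have heq : ∀ N, ∑ s ∈ F N, ∏ i ∈ s.1, lam i
      = ∑ t ∈ (Finset.range N).powersetCard k, ∏ i ∈ t, lam i := by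
    intro N
    rw [hF, Finset.sum_subtype_eq_sum_filter (fun t => ∏ i ∈ t, lam i),
      ← Finset.powersetCard_eq_filter]
  rw [esymm]
  exact this.congr heq

lemma summable_pow_aux (lam : ℕ → ℝ) (hsum : Summable (fun n => |lam n|)) {j : ℕ} (hj : 1 ≤ j) :
    Summable (fun n => lam n ^ j) := by
  set C : ℝ := ∑' n, |lam n| with hC
  have hle : ∀ n, |lam n| ≤ C := fun n => hC ▸ Summable.le_tsum hsum n (fun j _ => abs_nonneg (lam j))
  refine Summable.of_abs ?_
  refine Summable.of_nonneg_of_le (fun n => abs_nonneg _)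
    (f := fun n => C ^ (j - 1) * |lam n|) (fun n => ?_) (hsum.mul_left _)
  rw [abs_pow]
  calc |lam n| ^ j = |lam n| ^ (j - 1) * |lam n| := by
        rw [← pow_succ]; congr 1; omega
    _ ≤ C ^ (j - 1) * |lam n| :=
        mul_le_mul_of_nonneg_right (pow_le_pow_left₀ (abs_nonneg _) (hle n) _) (abs_nonneg _)

lemma sum_powersetCard_fin (g : ℕ → ℝ) (N m : ℕ) :
    ∑ t ∈ (Finset.univ : Finset (Fin N)).powersetCard m, ∏ i ∈ t, g i
      = ∑ t ∈ (Finset.range N).powersetCard m, ∏ i ∈ t, g i := by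
  rw [show Finset.range N = Finset.Iio N from (Nat.Iio_eq_range N).symm, ← Fin.map_valEmbedding_univ, Finset.powersetCard_map, Finset.sum_map]
  refine Finset.sum_congr rfl fun t _ => ?_
  show ∏ i ∈ t, g ↑i = ∏ i ∈ t.map Fin.valEmbedding, g i
  rw [Finset.prod_map]
  rfl

lemma newton_finite (lam : ℕ → ℝ) (N k : ℕ) (hk : 1 ≤ k) :
    (k : ℝ) * (∑ t ∈ (Finset.range N).powersetCard k, ∏ i ∈ t, lam i)
      = ∑ j ∈ Finset.Icc 1 k,
          (-1 : ℝ) ^ (j - 1) * (∑ t ∈ (Finset.range N).powersetCard (k - j), ∏ i ∈ t, lam i)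
            * (∑ i ∈ Finset.range N, lam i ^ j) := by
  classical
  have h := congrArg (MvPolynomial.aeval (fun i : Fin N => lam i)) (MvPolynomial.mul_esymm_eq_sum (Fin N) ℝ k)
  have heval_esymm : ∀ m : ℕ,
      MvPolynomial.aeval (fun i : Fin N => lam i) (MvPolynomial.esymm (Fin N) ℝ m)
      = ∑ t ∈ (Finset.range N).powersetCard m, ∏ i ∈ t, lam i := by
    intro m
    rw [MvPolynomial.aeval_esymm_eq_multiset_esymm, Finset.esymm_map_val]
    exact sum_powersetCard_fin lam N m
  have heval_psum : ∀ m : ℕ,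
      MvPolynomial.aeval (fun i : Fin N => lam i) (MvPolynomial.psum (Fin N) ℝ m)
      = ∑ i ∈ Finset.range N, lam i ^ m := by
    intro m
    simp only [MvPolynomial.psum, map_sum, map_pow, MvPolynomial.aeval_X]
    exact Fin.sum_univ_eq_sum_range (fun i => lam i ^ m) N
  simp only [map_mul, map_sum, map_pow, map_neg, map_one, map_natCast, heval_esymm,
    heval_psum] at h
  rw [h, Finset.mul_sum]
  refine Finset.sum_nbij' (i := fun a => a.2) (j := fun j => (k - j, j)) ?_ ?_ ?_ ?_ ?_
  · intro a ha
    simp only [Finset.mem_filter, Finset.HasAntidiagonal.mem_antidiagonal] at ha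
    simp only [Finset.mem_Icc]
    omega
  · intro j hj
    simp only [Finset.mem_Icc] at hj
    simp only [Finset.mem_filter, Finset.HasAntidiagonal.mem_antidiagonal]
    omega
  · intro a ha
    simp only [Finset.mem_filter, Finset.HasAntidiagonal.mem_antidiagonal] at ha
    ext <;> simp <;> omega
  · intro j hj
    rfl
  · intro a ha
    simp only [Finset.mem_filter, Finset.HasAntidiagonal.mem_antidiagonal] at ha
    obtain ⟨hsum', hlt⟩ := ha
    have h1 : a.1 = k - a.2 := by omega
    have hsign : (-1 : ℝ) ^ (k + 1) * (-1 : ℝ) ^ a.1 = (-1 : ℝ) ^ (a.2 - 1) := by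
      rw [← pow_add]
      have : k + 1 + a.1 = (a.2 - 1) + 2 * (a.1 + 1) := by omega
      rw [this, pow_add, pow_mul]
      simp
    rw [← h1, ← mul_assoc, ← mul_assoc, hsign]

theorem stmt_15 (lam : ℕ → ℝ) (hsum : Summable (fun n => |lam n|)) :
    ∀ k : ℕ, 1 ≤ k →
      (k : ℝ) * esymm lam k =
        ∑ j ∈ Finset.Icc 1 k,
          (-1 : ℝ) ^ (j - 1) * esymm lam (k - j) * (∑' n : ℕ, lam n ^ j) := by
  intro k hk
  have hL : Tendsto (fun N => (k : ℝ) * ∑ t ∈ (Finset.range N).powersetCard k, ∏ i ∈ t, lam i)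
      atTop (𝓝 ((k : ℝ) * esymm lam k)) := (tendsto_esymm lam hsum k).const_mul _
  have hR : Tendsto (fun N => ∑ j ∈ Finset.Icc 1 k,
      (-1 : ℝ) ^ (j - 1) * (∑ t ∈ (Finset.range N).powersetCard (k - j), ∏ i ∈ t, lam i)
        * (∑ i ∈ Finset.range N, lam i ^ j)) atTop
      (𝓝 (∑ j ∈ Finset.Icc 1 k,
        (-1 : ℝ) ^ (j - 1) * esymm lam (k - j) * (∑' n : ℕ, lam n ^ j))) := by
    refine tendsto_finset_sum _ fun j hj => ?_
    have hj1 : 1 ≤ j := (Finset.mem_Icc.mp hj).1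
    exact (((tendsto_esymm lam hsum (k - j)).const_mul _).mul
      ((summable_pow_aux lam hsum hj1).hasSum.tendsto_sum_nat))
  have heq : (fun N => (k : ℝ) * ∑ t ∈ (Finset.range N).powersetCard k, ∏ i ∈ t, lam i)
      = fun N => ∑ j ∈ Finset.Icc 1 k,
          (-1 : ℝ) ^ (j - 1) * (∑ t ∈ (Finset.range N).powersetCard (k - j), ∏ i ∈ t, lam i)
            * (∑ i ∈ Finset.range N, lam i ^ j) := funext fun N => newton_finite lam N k hk
  rw [heq] at hL
  exact tendsto_nhds_unique hL hR
end
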